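/- The set of norm-continuous representations of a compact group in a unital C*-algebra is locally an analytic retract of the ambient Banach space (the key content of its being a real-analytic Banach submanifold): let G be a compact topological group, A a unital C*-algebra, and R ⊆ C(G, A) the set of norm-continuous representations of G in A. Then for every U ∈ R there exist an open neighborhood 𝒰 of U in C(G, A) and a map r : 𝒰 → C(G, A), analytic on 𝒰 as a map between real Banach spaces, such that r(f) ∈ R for every f ∈ 𝒰 and r(f) = f for every f ∈ R ∩ 𝒰. -/

import Mathlib

/-- A continuous map `f : C(G, A)` "is a norm-continuous representation of `G` in `A`":
it is unitary-valued, unital and multiplicative. -/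
def IsUnitaryRep {G : Type*} [Group G] [TopologicalSpace G]
    {A : Type*} [NormedRing A] [StarRing A] [CStarRing A] [NormedAlgebra ℂ A]
    [CompleteSpace A] [StarModule ℂ A] (f : C(G, A)) : Prop :=
  (∀ g : G, f g ∈ unitary A) ∧ f 1 = 1 ∧ ∀ g h : G, f (g * h) = f g * f h

/-!
Averaging against the Haar probability measure, `a(f) = ∫ f(g) U(g)* dg` is a bounded real-linear
function of `f` with `a(U) = 1`, so `a(f)` is invertible and `a(f)* a(f)` is close to `1` for `f`
near `U`; when `f` is a representation, `a(f)` intertwines `U` with `f`. The unitary factor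
`u = a (a* a)^(-1/2)` of its polar decomposition, with the inverse square root given by the
binomial series and hence real-analytic near `1`, still intertwines `U` with `f`. So
`r(f) = u U(·) u*` is a representation, depends analytically on `f`, and equals `f` whenever `f`
is a representation.
-/

section BinomialSeries

open FormalMultilinearSeries Finset

theorem FormalMultilinearSeries.ofScalars_radius_le_ofScalars_radius
    {𝕜 : Type*} [NontriviallyNormedField 𝕜] (E : Type*) [NormedRing E] [NormedAlgebra 𝕜 E]
    (c : ℕ → 𝕜) :
    (ofScalars 𝕜 c).radius ≤ (ofScalars E c).radius := by
  refine ENNReal.le_of_forall_nnreal_lt fun r hr => ?_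
  obtain ⟨C, -, hC⟩ := (ofScalars 𝕜 c).norm_mul_pow_le_of_lt_radius hr
  refine (ofScalars E c).le_radius_of_eventually_le C ?_
  filter_upwards [Filter.eventually_gt_atTop 0] with n hn
  calc ‖ofScalars E c n‖ * (r : ℝ) ^ n ≤ ‖c n‖ * (r : ℝ) ^ n := by
        gcongr; exact ofScalars_norm_le E c n hn
    _ = ‖ofScalars 𝕜 c n‖ * (r : ℝ) ^ n := by rw [ofScalars_norm]
    _ ≤ C := hC n

variable {𝕂 : Type*} [RCLike 𝕂] {A : Type*} [NormedRing A] [NormedAlgebra 𝕂 A]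

theorem one_le_binomialSeries_radius (a : 𝕂) : 1 ≤ (binomialSeries A a).radius :=
  (binomialSeries_radius_ge_one (𝔸 := 𝕂)).trans
    (ofScalars_radius_le_ofScalars_radius A (Ring.choose a ·))

theorem binomialSeries_sum_eq_tsum (a : 𝕂) (x : A) :
    (binomialSeries A a).sum x = ∑' n, Ring.choose a n • x ^ n := by
  simp only [FormalMultilinearSeries.sum, binomialSeries, ofScalars_apply_eq]

theorem mem_eball_binomialSeries_radius {x : A} (hx : ‖x‖ < 1) (a : 𝕂) :
    x ∈ Metric.eball (0 : A) (binomialSeries A a).radius := by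
  refine lt_of_lt_of_le ?_ (one_le_binomialSeries_radius a)
  rw [edist_zero_right, ← ofReal_norm]
  exact ENNReal.ofReal_lt_one.mpr hx

theorem summable_norm_binomialSeries {x : A} (hx : ‖x‖ < 1) (a : 𝕂) :
    Summable fun n => ‖Ring.choose a n • x ^ n‖ := by
  simpa [binomialSeries, ofScalars_apply_eq] using
    (binomialSeries A a).summable_norm_apply (mem_eball_binomialSeries_radius hx a)

variable [CompleteSpace A]

/-- The Cauchy product of the two series is computed by the Chu–Vandermonde identity. -/
theorem binomialSeries_sum_mul {x : A} (hx : ‖x‖ < 1) (a b : 𝕂) :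
    (binomialSeries A a).sum x * (binomialSeries A b).sum x =
      (binomialSeries A (a + b)).sum x := by
  simp only [binomialSeries_sum_eq_tsum]
  rw [tsum_mul_tsum_eq_tsum_sum_antidiagonal_of_summable_norm
    (summable_norm_binomialSeries hx a) (summable_norm_binomialSeries hx b)]
  refine tsum_congr fun n => ?_
  rw [Ring.add_choose_eq n (Commute.all a b), sum_smul]
  refine sum_congr rfl fun ij hij => ?_
  rw [smul_mul_smul_comm, ← pow_add, mem_antidiagonal.mp hij]

theorem binomialSeries_neg_one_sum_mul {x : A} (hx : ‖x‖ < 1) :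
    (binomialSeries A (-1 : 𝕂)).sum x * (1 + x) = 1 := by
  have hchoose (n : ℕ) : Ring.choose (-1 : 𝕂) n = (-1) ^ n := by
    rw [Ring.choose_neg, add_sub_cancel_left, Ring.choose_natCast, Nat.choose_self]
    simp [Int.negOnePow, Units.smul_def]
  simp only [binomialSeries_sum_eq_tsum, hchoose, ← smul_pow, neg_one_smul]
  simpa using geom_series_mul_neg (-x) (by simpa using hx)

end BinomialSeries

section InvSqrt

variable {A : Type*} [NormedRing A] [NormedAlgebra ℝ A]

noncomputable def invSqrt (x : A) : A := (binomialSeries A (-2⁻¹ : ℝ)).sum (x - 1)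

theorem Commute.invSqrt_right {x y : A} (h : Commute y x) : Commute y (invSqrt x) := by
  rw [invSqrt, binomialSeries_sum_eq_tsum]
  exact .tsum_right y fun n => ((h.sub_right (.one_right y)).pow_right n).smul_right _

theorem IsSelfAdjoint.invSqrt [StarRing A] [ContinuousStar A] [StarModule ℝ A] {x : A}
    (hx : IsSelfAdjoint x) : IsSelfAdjoint (invSqrt x) := by
  rw [IsSelfAdjoint, _root_.invSqrt, binomialSeries_sum_eq_tsum, tsum_star]
  refine tsum_congr fun n => ?_
  rw [star_smul, star_pow, star_sub, star_one, hx.star_eq, star_trivial]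

variable [CompleteSpace A]

theorem invSqrt_mul_invSqrt_mul_self {x : A} (hx : ‖x - 1‖ < 1) :
    invSqrt x * invSqrt x * x = 1 := by
  calc invSqrt x * invSqrt x * x
      = (binomialSeries A (-1 : ℝ)).sum (x - 1) * (1 + (x - 1)) := by
        rw [invSqrt, binomialSeries_sum_mul hx, add_sub_cancel]; norm_num
    _ = 1 := binomialSeries_neg_one_sum_mul hx

theorem analyticOnNhd_invSqrt : AnalyticOnNhd ℝ (invSqrt (A := A)) (Metric.ball 1 1) := by
  intro x hx
  have hsum : AnalyticAt ℝ (binomialSeries A (-2⁻¹ : ℝ)).sum (x - 1) :=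
    (binomialSeries A (-2⁻¹ : ℝ)).analyticOnNhd _
      (mem_eball_binomialSeries_radius (𝕂 := ℝ) (mem_ball_iff_norm.mp hx) (-2⁻¹))
  exact hsum.comp (f := fun y => y - 1) (analyticAt_id.sub analyticAt_const)

end InvSqrt

section PolarPart

variable {A : Type*} [NormedRing A] [StarRing A]

variable (A) in
def polarDomain : Set A := {x | IsUnit x ∧ ‖star x * x - 1‖ < 1}

theorem isOpen_polarDomain [CompleteSpace A] [ContinuousStar A] : IsOpen (polarDomain A) :=
  Units.isOpen.inter <| isOpen_lt (f := fun x : A => ‖star x * x - 1‖) (by fun_prop)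
    continuous_const

theorem one_mem_polarDomain : (1 : A) ∈ polarDomain A := by
  simp [polarDomain]

variable [NormedAlgebra ℝ A]

noncomputable def polarPart (x : A) : A := x * invSqrt (star x * x)

variable [CompleteSpace A]

theorem mul_invSqrt_mul_invSqrt_mul_star {x : A} (hx : IsUnit x) (h : ‖star x * x - 1‖ < 1) :
    x * (invSqrt (star x * x) * invSqrt (star x * x)) * star x = 1 := by
  set s := invSqrt (star x * x)
  have hc : Commute (star x * x) s := (Commute.refl _).invSqrt_right
  refine hx.star.isRegular.left.mul_eq_one_symm ?_
  calc star x * (x * (s * s)) = s * s * (star x * x) := by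
        rw [← mul_assoc, (hc.mul_right hc).eq]
    _ = 1 := invSqrt_mul_invSqrt_mul_self h

variable [ContinuousStar A] [StarModule ℝ A]

theorem polarPart_mem_unitary {x : A} (hx : x ∈ polarDomain A) : polarPart x ∈ unitary A := by
  set s := invSqrt (star x * x)
  have hc : Commute (star x * x) s := (Commute.refl _).invSqrt_right
  rw [Unitary.mem_iff, polarPart, star_mul, (IsSelfAdjoint.star_mul_self x).invSqrt.star_eq]
  constructor
  · calc s * star x * (x * s) = s * ((star x * x) * s) := by noncomm_ring
      _ = s * s * (star x * x) := by rw [hc.eq, mul_assoc]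
      _ = 1 := invSqrt_mul_invSqrt_mul_self hx.2
  · rw [← mul_invSqrt_mul_invSqrt_mul_star hx.1 hx.2]; noncomm_ring

theorem polarPart_mul_mul_star {x y z : A} (hx : x ∈ polarDomain A)
    (hzx : z * x = x * y) (hxz : star x * z = y * star x) :
    polarPart x * y * star (polarPart x) = z := by
  have hy : Commute y (star x * x) := by
    rw [Commute, SemiconjBy, ← mul_assoc, ← hxz, mul_assoc, hzx, mul_assoc]
  set s := invSqrt (star x * x)
  have hys : Commute y s := hy.invSqrt_right
  calc polarPart x * y * star (polarPart x) = x * (s * y * s) * star x := by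
        rw [polarPart, star_mul, (IsSelfAdjoint.star_mul_self x).invSqrt.star_eq]; noncomm_ring
    _ = x * y * (s * s) * star x := by rw [← hys.eq]; noncomm_ring
    _ = z * (x * (s * s) * star x) := by rw [← hzx]; noncomm_ring
    _ = z := by rw [mul_invSqrt_mul_invSqrt_mul_star hx.1 hx.2, mul_one]

theorem analyticOnNhd_polarPart : AnalyticOnNhd ℝ (polarPart (A := A)) (polarDomain A) := by
  intro x hx
  have hstar : AnalyticAt ℝ (star : A → A) x :=
    (starL' ℝ : A ≃L[ℝ] A).toContinuousLinearMap.analyticAt x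
  have hp : AnalyticAt ℝ (fun y : A => star y * y) x := hstar.mul analyticAt_id
  exact analyticAt_id.mul <|
    (analyticOnNhd_invSqrt _ (mem_ball_iff_norm.mpr hx.2)).comp (f := fun y => star y * y) hp

end PolarPart

section ContinuousMap

open MeasureTheory

variable {X E : Type*} [TopologicalSpace X] [CompactSpace X] [NormedAddCommGroup E]

theorem ContinuousMap.integrable [MeasurableSpace X] [OpensMeasurableSpace X]
    (μ : Measure X) [IsFiniteMeasure μ] (f : C(X, E)) : Integrable f μ :=
  f.continuous.integrable_of_hasCompactSupport (.of_compactSpace _)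

variable (𝕜 : Type*) [NontriviallyNormedField 𝕜] [NormedSpace 𝕜 E] in
noncomputable def ContinuousMap.constL : E →L[𝕜] C(X, E) :=
  LinearMap.mkContinuous
    { toFun := ContinuousMap.const X
      map_add' _ _ := rfl
      map_smul' _ _ := rfl }
    1 fun x => by simpa using (ContinuousMap.norm_le _ (norm_nonneg x)).2 fun _ => le_rfl

variable [MeasurableSpace X] [OpensMeasurableSpace X] [NormedSpace ℝ E] in
noncomputable def ContinuousMap.integralCLM (μ : Measure X) [IsFiniteMeasure μ] :
    C(X, E) →L[ℝ] E :=
  LinearMap.mkContinuous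
    { toFun := fun f => ∫ x, f x ∂μ
      map_add' f g := integral_add (f.integrable μ) (g.integrable μ)
      map_smul' c f := integral_smul c f }
    (μ.real Set.univ) fun f => by
      simpa [mul_comm] using
        norm_integral_le_of_norm_le_const (Filter.Eventually.of_forall f.norm_coe_le_norm)

variable {A : Type*} [NormedRing A] [StarRing A] [ContinuousStar A] [NormedAlgebra ℝ A]

def ContinuousMap.starConj (u : A) (f : C(X, A)) : C(X, A) :=
  .const X u * f * .const X (star u)

theorem ContinuousMap.analyticAt_starConj [StarModule ℝ A] (f : C(X, A)) (u : A) :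
    AnalyticAt ℝ (starConj · f) u := by
  have hconst (v : A) : AnalyticAt ℝ (constL (X := X) (E := A) ℝ) v :=
    (constL (X := X) (E := A) ℝ).analyticAt v
  have hstar : AnalyticAt ℝ (star : A → A) u :=
    (starL' ℝ : A ≃L[ℝ] A).toContinuousLinearMap.analyticAt u
  exact ((hconst u).mul analyticAt_const).mul ((hconst (star u)).comp hstar)

variable [MeasurableSpace X] [OpensMeasurableSpace X] (μ : Measure X)
  [IsFiniteMeasure μ]

noncomputable def avgIntertwiner (U : C(X, A)) : C(X, A) →L[ℝ] A :=
  ContinuousMap.integralCLM μ ∘L (ContinuousLinearMap.mul ℝ C(X, A)).flip (star U)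

theorem avgIntertwiner_apply (U f : C(X, A)) :
    avgIntertwiner μ U f = ∫ x, f x * star (U x) ∂μ := rfl

theorem avgIntertwiner_self [CompleteSpace A] [IsProbabilityMeasure μ] {U : C(X, A)}
    (hU : ∀ x, U x ∈ unitary A) :
    avgIntertwiner μ U U = 1 := by
  simp [avgIntertwiner_apply, Unitary.mul_star_self_of_mem (hU _)]

end ContinuousMap

section Representation

open MeasureTheory

theorem exists_isProbabilityMeasure_isMulLeftInvariant (G : Type*) [Group G] [TopologicalSpace G]
    [IsTopologicalGroup G] [CompactSpace G] [MeasurableSpace G] [BorelSpace G] :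
    ∃ μ : Measure G, IsProbabilityMeasure μ ∧ μ.IsMulLeftInvariant := by
  refine ⟨Measure.haarMeasure ⊤, ⟨?_⟩, inferInstance⟩
  have := Measure.haarMeasure_self (G := G) (K₀ := ⊤)
  rwa [TopologicalSpace.PositiveCompacts.coe_top] at this

variable {G : Type*} [Group G] [TopologicalSpace G] {A : Type*} [NormedRing A] [StarRing A]
  [CStarRing A] [NormedAlgebra ℂ A] [CompleteSpace A] [StarModule ℂ A]

theorem IsUnitaryRep.star_apply {f : C(G, A)} (hf : IsUnitaryRep f) (g : G) :
    star (f g) = f g⁻¹ := by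
  rw [← mul_one (star (f g)), ← hf.2.1, ← mul_inv_cancel g, hf.2.2, ← mul_assoc,
    Unitary.star_mul_self_of_mem (hf.1 g), one_mul]

theorem IsUnitaryRep.starConj {U : C(G, A)} (hU : IsUnitaryRep U) {u : A}
    (hu : u ∈ unitary A) :
    IsUnitaryRep (U.starConj u) := by
  refine ⟨fun g => mul_mem (mul_mem hu (hU.1 g)) (Unitary.star_mem hu), ?_, fun g h => ?_⟩
  · show u * U 1 * star u = 1
    rw [hU.2.1, mul_one, Unitary.mul_star_self_of_mem hu]
  · show u * U (g * h) * star u = u * U g * star u * (u * U h * star u)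
    calc u * U (g * h) * star u = u * U g * (star u * u) * U h * star u := by
          rw [hU.2.2, Unitary.star_mul_self_of_mem hu]; noncomm_ring
      _ = u * U g * star u * (u * U h * star u) := by noncomm_ring

variable [IsTopologicalGroup G] [CompactSpace G] [MeasurableSpace G] [BorelSpace G]
  (μ : Measure G) [IsProbabilityMeasure μ] [μ.IsMulLeftInvariant]

theorem mul_avgIntertwiner {U f : C(G, A)} (hU : IsUnitaryRep U)
    (hf : ∀ g h, f (g * h) = f g * f h) (g : G) :
    f g * avgIntertwiner μ U f = avgIntertwiner μ U f * U g := by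
  have hint : Integrable (fun h => f h * star (U h)) μ := (f * star U).integrable μ
  rw [avgIntertwiner_apply, ← integral_const_mul_of_integrable hint,
    ← integral_mul_const_of_integrable hint]
  calc ∫ h, f g * (f h * star (U h)) ∂μ
      = ∫ h, f (g * h) * star (U (g⁻¹ * (g * h))) ∂μ := by simp [hf, mul_assoc]
    _ = ∫ h, f h * star (U (g⁻¹ * h)) ∂μ :=
        integral_mul_left_eq_self (fun h => f h * star (U (g⁻¹ * h))) g
    _ = ∫ h, f h * star (U h) * U g ∂μ := by
        simp [hU.2.2, hU.star_apply, mul_assoc]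

theorem star_avgIntertwiner_mul {U f : C(G, A)} (hU : IsUnitaryRep U) (hf : IsUnitaryRep f)
    (g : G) : star (avgIntertwiner μ U f) * f g = U g * star (avgIntertwiner μ U f) := by
  simpa [hU.star_apply, hf.star_apply] using congrArg star (mul_avgIntertwiner μ hU hf.2.2 g⁻¹)

end Representation

theorem rep_cstar_locally_analytic_retract
    {G : Type*} [Group G] [TopologicalSpace G] [IsTopologicalGroup G] [CompactSpace G]
    {A : Type*} [NormedRing A] [StarRing A] [CStarRing A] [NormedAlgebra ℂ A]
    [CompleteSpace A] [StarModule ℂ A]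
    (U : C(G, A)) (hU : IsUnitaryRep U) :
    ∃ 𝒰 : Set C(G, A), IsOpen 𝒰 ∧ U ∈ 𝒰 ∧
      ∃ r : C(G, A) → C(G, A),
        AnalyticOn ℝ r 𝒰 ∧
        (∀ f ∈ 𝒰, IsUnitaryRep (r f)) ∧
        (∀ f ∈ {f : C(G, A) | IsUnitaryRep f} ∩ 𝒰, r f = f) := by
  let _ : MeasurableSpace G := borel G
  have _ : BorelSpace G := ⟨rfl⟩
  obtain ⟨μ, _, _⟩ := exists_isProbabilityMeasure_isMulLeftInvariant G
  set a := avgIntertwiner μ U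
  refine ⟨a ⁻¹' polarDomain A, isOpen_polarDomain.preimage a.continuous, ?_,
    fun f => U.starConj (polarPart (a f)), ?_, fun f hf => hU.starConj (polarPart_mem_unitary hf),
    ?_⟩
  · rw [Set.mem_preimage, avgIntertwiner_self μ hU.1]
    exact one_mem_polarDomain
  · exact fun f hf => ((U.analyticAt_starConj _).comp
      ((analyticOnNhd_polarPart _ hf).comp (a.analyticAt f))).analyticWithinAt
  · rintro f ⟨hf, hfa⟩
    ext g
    exact polarPart_mul_mul_star hfa (mul_avgIntertwiner μ hU hf.2.2 g)
      (star_avgIntertwiner_mul μ hU hf g)
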